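/- Let m ∈ {0,…,N−1}, k ∈ {0,…,C−1}, ν ∈ ℝ, and let τ satisfy k·T_SC ≤ τ < k·T_SC + min{T_SC − t_{m,1}, t_{m,1}}. Set q̃ = k + 1, E = 2·c̃₁·τ − k/Δt − ν, and Ẽ = E − 1/Δt. Then the auto-ambiguity function of the m-th AFDM chirp subcarrier admits the closed form A_{φ_m,φ_m}(τ, ν) = exp(2πi·((m/T)·τ − c̃₁·τ²)) · [ Σ_{i=0}^{C−q̃} exp(−2πi·(i/Δt)·τ) · ( I(E, t_{m,i} + τ, t_{m,i+q̃}) + I(Ẽ, t_{m,i+q̃}, t_{m,i+1} + τ) ) + exp(−2πi·((C−q̃+1)/Δt)·τ) · I(E, t_{m,C−q̃+1} + τ, T) ]. -/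

import Mathlib

open MeasureTheory Complex Real

noncomputable section

namespace AFDM

variable (N C : ℕ) (Δt : ℝ)

/-- Frame duration `T = N·Δt`. -/
def T : ℝ := N * Δt

/-- Chirp rate parameter `c̃₁ = C/(2·T·Δt)`. -/
def ctil : ℝ := C / (2 * T N Δt * Δt)

/-- Subchirp duration `T_SC = T/C`. -/
def TSC : ℝ := T N Δt / C

/-- Spectrum wrapping points `t_{m,q}`: `t_{m,0} = 0`, `t_{m,q} = q·T/C − m·Δt/C` for
`q = 1,…,C`, and `t_{m,C+1} = T`. -/
def tp (m q : ℕ) : ℝ :=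
  if q = 0 then 0 else if q ≤ C then q * T N Δt / C - m * Δt / C else T N Δt

/-- Wrapping index function `q_m(t)`: equals `q` on `[t_{m,q}, t_{m,q+1})` for `t ∈ [0,T)`. -/
def qm (m : ℕ) (t : ℝ) : ℤ :=
  (((Finset.range (C + 1)).filter (fun q => tp N C Δt m q ≤ t)).card : ℤ) - 1

/-- The `m`-th continuous-time AFDM chirp subcarrier with parameter `c₂`:
`φ_m(t) = exp(2πi(c₂·m² + c̃₁·t² + (m/T)·t − q_m(t)·t/Δt))` on `[0,T)`, `0` otherwise. -/
def phi (c₂ : ℝ) (m : ℕ) (t : ℝ) : ℂ :=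
  if 0 ≤ t ∧ t < T N Δt then
    Complex.exp (2 * Real.pi * Complex.I *
      ((c₂ * (m : ℝ) ^ 2 + ctil N C Δt * t ^ 2 + ((m : ℝ) / T N Δt) * t
        - (qm N C Δt m t : ℝ) * t / Δt : ℝ) : ℂ))
  else 0

/-- The aperiodic ambiguity function `A_{a,b}(τ,ν) = ∫ a(t)·conj(b(t−τ))·exp(−2πiνt) dt`. -/
def AF (a b : ℝ → ℂ) (τ ν : ℝ) : ℂ :=
  ∫ t : ℝ, a t * (starRingEnd ℂ) (b (t - τ)) *
    Complex.exp (-(2 * Real.pi * Complex.I * ((ν * t : ℝ) : ℂ)))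

/-- The integral indicator `I(c, t₁, t₂)`. -/
def Iind (c t₁ t₂ : ℝ) : ℂ :=
  if c ≠ 0 then
    (Complex.exp (2 * Real.pi * Complex.I * ((c * t₂ : ℝ) : ℂ))
      - Complex.exp (2 * Real.pi * Complex.I * ((c * t₁ : ℝ) : ℂ))) /
      (2 * Real.pi * Complex.I * ((c : ℝ) : ℂ))
  else ((t₂ - t₁ : ℝ) : ℂ)


/-!
On `[τ, T)` the integrand `φ_m(t) · conj φ_m(t − τ) · e^{−2πiνt}` has its quadratic phases
cancel: wherever the wrapping indices `q_m(t)` and `q_m(t − τ)` are constant it equals a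
constant times `exp(2πi (2c̃₁τ − (q_m(t) − q_m(t − τ))/Δt − ν) t)`. For `τ` in the given window
the shifted wrapping points `t_{m,i} + τ` interleave with the points `t_{m,i+k+1}`, and the
index gap `q_m(t) − q_m(t − τ)` is `k` on `(t_{m,i} + τ, t_{m,i+k+1})` and `k + 1` on
`(t_{m,i+k+1}, t_{m,i+1} + τ)`. Integrating the linear phase over each of these pieces gives the
`I(E, ·, ·)` and `I(Ẽ, ·, ·)` terms.
-/

theorem integral_exp_two_pi_I_mul (α a b : ℝ) :
    ∫ t in a..b, Complex.exp (2 * Real.pi * Complex.I * ((α * t : ℝ) : ℂ)) = Iind α a b := by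
  by_cases hα : α = 0
  · simp [Iind, hα]
  have hc : 2 * Real.pi * Complex.I * (α : ℂ) ≠ 0 := by simp [Real.pi_ne_zero, hα]
  simp only [Iind, if_pos hα, Complex.ofReal_mul, ← mul_assoc]
  exact integral_exp_mul_complex hc

theorem integral_eq_const_mul_Iind_of_eqOn {f : ℝ → ℂ} {a b α : ℝ} (c : ℂ) (hab : a ≤ b)
    (hf : Set.EqOn f (fun t => c * Complex.exp (2 * Real.pi * Complex.I * ((α * t : ℝ) : ℂ)))
      (Set.Ioo a b)) :
    IntervalIntegrable f volume a b ∧ ∫ t in a..b, f t = c * Iind α a b := by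
  refine ⟨(intervalIntegrable_congr_uIoo (Set.uIoo_of_le hab ▸ hf)).mpr ?_, ?_⟩
  · exact (continuous_const.mul (by fun_prop)).intervalIntegrable a b
  · rw [intervalIntegral.integral_congr_Ioo_of_le hab hf, intervalIntegral.integral_const_mul,
      integral_exp_two_pi_I_mul]

theorem intervalIntegral_eq_sum_interleaved {E : Type*} [NormedAddCommGroup E] [NormedSpace ℝ E]
    {f : ℝ → E} {μ : Measure ℝ} [IsLocallyFiniteMeasure μ] {a b : ℕ → ℝ} {n : ℕ}
    (ha : ∀ i < n, IntervalIntegrable f μ (a i) (b i))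
    (hb : ∀ i < n, IntervalIntegrable f μ (b i) (a (i + 1))) :
    ∫ t in a 0..a n, f t ∂μ =
      ∑ i ∈ Finset.range n, ((∫ t in a i..b i, f t ∂μ) + ∫ t in b i..a (i + 1), f t ∂μ) := by
  rw [← intervalIntegral.sum_integral_adjacent_intervals fun i hi => (ha i hi).trans (hb i hi)]
  refine Finset.sum_congr rfl fun i hi => ?_
  have hi := Finset.mem_range.mp hi
  exact (intervalIntegral.integral_add_adjacent_intervals (ha i hi) (hb i hi)).symm

def afIntegrand (a b : ℝ → ℂ) (τ ν t : ℝ) : ℂ :=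
  a t * (starRingEnd ℂ) (b (t - τ)) * Complex.exp (-(2 * Real.pi * Complex.I * ((ν * t : ℝ) : ℂ)))

theorem AF_eq_intervalIntegral {a b : ℝ → ℂ} {L τ ν : ℝ}
    (ha : Function.support a ⊆ Set.Ico 0 L) (hb : Function.support b ⊆ Set.Ico 0 L) :
    AF a b τ ν = ∫ t in τ..L, afIntegrand a b τ ν t := by
  change ∫ t, afIntegrand a b τ ν t = _
  have hvanish : ∀ t ∉ Set.Ico τ L, afIntegrand a b τ ν t = 0 := by
    intro t ht
    rcases lt_or_ge t τ with htτ | hτt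
    · have : b (t - τ) = 0 := Function.notMem_support.mp fun h => by linarith [(hb h).1]
      simp [afIntegrand, this]
    · have : a t = 0 := Function.notMem_support.mp fun h => ht ⟨hτt, (ha h).2⟩
      simp [afIntegrand, this]
  rcases lt_or_ge L τ with hLτ | hτL
  · have hzero : afIntegrand a b τ ν = 0 :=
      funext fun t => hvanish t (by simp [Set.Ico_eq_empty_of_le hLτ.le])
    simp [hzero]
  calc ∫ t, afIntegrand a b τ ν t = ∫ t in Set.Ico τ L, afIntegrand a b τ ν t :=
      (setIntegral_eq_integral_of_forall_compl_eq_zero hvanish).symm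
    _ = ∫ t in τ..L, afIntegrand a b τ ν t := by
      rw [intervalIntegral.integral_of_le hτL, integral_Ico_eq_integral_Ioo,
        integral_Ioc_eq_integral_Ioo]

section WrappingPoints

variable {N C : ℕ} {Δt : ℝ} {m : ℕ}

theorem T_eq_mul_TSC (hC : 0 < C) : T N Δt = C * TSC N C Δt := by
  rw [TSC, mul_div_cancel₀ _ (by positivity)]

@[simp] theorem tp_zero : tp N C Δt m 0 = 0 := rfl

theorem tp_of_le {q : ℕ} (hq : 1 ≤ q) (hqC : q ≤ C) :
    tp N C Δt m q = q * TSC N C Δt - m * Δt / C := by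
  rw [tp, if_neg (by omega), if_pos hqC, TSC, mul_div_assoc]

theorem tp_of_lt {q : ℕ} (hq : C < q) : tp N C Δt m q = T N Δt := by
  rw [tp, if_neg (by omega), if_neg (by omega)]

theorem tp_mono (hC : 0 < C) (hΔt : 0 ≤ Δt) (hm : m ≤ N) : Monotone (tp N C Δt m) := by
  have hμ : 0 ≤ (m : ℝ) * Δt / C := by positivity
  have hμS : (m : ℝ) * Δt / C ≤ TSC N C Δt := by
    rw [TSC, T]; gcongr
  refine monotone_nat_of_le_succ fun q => ?_
  rcases Nat.eq_zero_or_pos q with rfl | hq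
  · rw [tp_zero, tp_of_le le_rfl hC]; push_cast; linarith
  rcases lt_or_ge q C with hqC | hqC
  · rw [tp_of_le hq hqC.le, tp_of_le (by omega) hqC]; push_cast; linarith
  rcases hqC.eq_or_lt with rfl | hqC
  · rw [tp_of_le hq le_rfl, tp_of_lt (Nat.lt_succ_self _), T_eq_mul_TSC hC]; linarith
  · rw [tp_of_lt hqC, tp_of_lt (by omega)]

theorem qm_eq_of_mem_Ico (hmono : Monotone (tp N C Δt m)) {q : ℕ} (hq : q ≤ C) {t : ℝ}
    (ht : t ∈ Set.Ico (tp N C Δt m q) (tp N C Δt m (q + 1))) : qm N C Δt m t = q := by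
  have hfilter : (Finset.range (C + 1)).filter (fun j => tp N C Δt m j ≤ t) =
      Finset.range (q + 1) := by
    ext j
    simp only [Finset.mem_filter, Finset.mem_range]
    constructor
    · rintro ⟨-, hj⟩
      by_contra! hqj
      exact (ht.2.trans_le (hmono (Nat.succ_le_of_lt (by omega)))).not_ge hj
    · exact fun hj => ⟨by omega, (hmono (Nat.lt_succ_iff.mp hj)).trans ht.1⟩
  rw [qm, hfilter, Finset.card_range]
  push_cast
  ring

theorem support_phi_subset (c₂ : ℝ) (m : ℕ) :
    Function.support (phi N C Δt c₂ m) ⊆ Set.Ico 0 (T N Δt) := fun t ht => by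
  by_contra h
  exact ht (if_neg h)

end WrappingPoints

section Integrand

variable {N C : ℕ} {Δt : ℝ} {m : ℕ}

theorem phi_of_mem_Ico (hmono : Monotone (tp N C Δt m)) (c₂ : ℝ) {q : ℕ} (hq : q ≤ C) {t : ℝ}
    (ht : t ∈ Set.Ico (tp N C Δt m q) (tp N C Δt m (q + 1))) :
    phi N C Δt c₂ m t = Complex.exp (2 * Real.pi * Complex.I *
      ((c₂ * (m : ℝ) ^ 2 + ctil N C Δt * t ^ 2 + ((m : ℝ) / T N Δt) * t
        - (q : ℝ) * t / Δt : ℝ) : ℂ)) := by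
  have h0 : 0 ≤ t := (hmono (Nat.zero_le q)).trans ht.1
  have hT : t < T N Δt :=
    ht.2.trans_le ((hmono (Nat.succ_le_succ hq)).trans_eq (tp_of_lt (Nat.lt_succ_self C)))
  rw [phi, if_pos ⟨h0, hT⟩, qm_eq_of_mem_Ico hmono hq ht]
  norm_cast

theorem afIntegrand_phi_of_mem_Ico (hmono : Monotone (tp N C Δt m)) (c₂ : ℝ) {a b : ℕ}
    (ha : a ≤ C) (hb : b ≤ C) {τ ν t : ℝ}
    (ht : t ∈ Set.Ico (tp N C Δt m a) (tp N C Δt m (a + 1)))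
    (hs : t - τ ∈ Set.Ico (tp N C Δt m b) (tp N C Δt m (b + 1))) :
    afIntegrand (phi N C Δt c₂ m) (phi N C Δt c₂ m) τ ν t =
      Complex.exp (2 * Real.pi * Complex.I *
          ((((m : ℝ) / T N Δt) * τ - ctil N C Δt * τ ^ 2 : ℝ) : ℂ)) *
        Complex.exp (-(2 * Real.pi * Complex.I * ((((b : ℝ) / Δt) * τ : ℝ) : ℂ))) *
        Complex.exp (2 * Real.pi * Complex.I *
          (((2 * ctil N C Δt * τ - ((a : ℝ) - b) / Δt - ν) * t : ℝ) : ℂ)) := by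
  rw [afIntegrand, phi_of_mem_Ico hmono c₂ ha ht, phi_of_mem_Ico hmono c₂ hb hs,
    ← Complex.exp_conj]
  simp only [← Complex.exp_add, map_mul, Complex.conj_ofReal, Complex.conj_I, map_ofNat]
  congr 1
  push_cast
  ring

end Integrand

section Window

variable {N C : ℕ} {Δt : ℝ} {m k : ℕ} {τ : ℝ}

theorem window_bounds (hC : 0 < C)
    (hτ : τ ≤ k * TSC N C Δt + min (TSC N C Δt - tp N C Δt m 1) (tp N C Δt m 1)) :
    τ ≤ k * TSC N C Δt + m * Δt / C ∧ τ ≤ (k + 1) * TSC N C Δt - m * Δt / C := by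
  have h₁ := hτ.trans (add_le_add_right (min_le_left _ _) _)
  have h₂ := hτ.trans (add_le_add_right (min_le_right _ _) _)
  rw [tp_of_le le_rfl hC, Nat.cast_one, one_mul] at h₁ h₂
  constructor <;> linarith

theorem tp_add_le_add (hC : 0 < C) (hk : k ≤ C) (hτ1 : k * TSC N C Δt ≤ τ)
    (hτA : τ ≤ k * TSC N C Δt + m * Δt / C) (hτB : τ ≤ (k + 1) * TSC N C Δt - m * Δt / C)
    {i : ℕ} (hi : i ≤ C + 1 - k) :
    tp N C Δt m (i + k) ≤ tp N C Δt m i + τ := by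
  have hμ : 0 ≤ (m : ℝ) * Δt / C := by linarith
  have hμS : (m : ℝ) * Δt / C ≤ TSC N C Δt := by linarith
  rcases Nat.eq_zero_or_pos i with rfl | hi0
  · rcases Nat.eq_zero_or_pos k with rfl | hk0
    · simpa using hτ1
    · rw [zero_add, tp_of_le hk0 hk, tp_zero, zero_add]; linarith
  rcases le_or_gt (i + k) C with hikC | hikC
  · rw [tp_of_le (by omega) hikC, tp_of_le hi0 (by omega)]; push_cast; linarith
  rw [tp_of_lt hikC, T_eq_mul_TSC hC]
  rcases le_or_gt i C with hiC | hiC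
  · have hi' : (i : ℝ) = C + 1 - k := by
      rw [eq_sub_iff_add_eq]; exact_mod_cast (show i + k = C + 1 by omega)
    rw [tp_of_le hi0 hiC, hi']
    linarith
  · obtain rfl : k = 0 := by omega
    rw [tp_of_lt hiC, T_eq_mul_TSC hC]
    simpa using hτ1

theorem add_le_tp_add (hC : 0 < C) (hk : k < C) (hτ1 : k * TSC N C Δt ≤ τ)
    (hτA : τ ≤ k * TSC N C Δt + m * Δt / C) (hτB : τ ≤ (k + 1) * TSC N C Δt - m * Δt / C)
    {i : ℕ} (hi : i ≤ C - k) :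
    tp N C Δt m i + τ ≤ tp N C Δt m (i + (k + 1)) := by
  have hμ : 0 ≤ (m : ℝ) * Δt / C := by linarith
  rcases Nat.eq_zero_or_pos i with rfl | hi0
  · rw [tp_zero, zero_add, zero_add, tp_of_le (by omega) hk]; push_cast; exact hτB
  rcases le_or_gt (i + (k + 1)) C with hikC | hikC
  · rw [tp_of_le (by omega) hikC, tp_of_le hi0 (by omega)]; push_cast; linarith
  have hi' : (i : ℝ) = C - k := by
    rw [eq_sub_iff_add_eq]; exact_mod_cast (show i + k = C by omega)
  rw [tp_of_lt hikC, T_eq_mul_TSC hC, tp_of_le hi0 (by omega), hi']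
  linarith

end Window

section Pieces

variable {N C : ℕ} {Δt : ℝ} {m k : ℕ} {τ : ℝ}

theorem intervalIntegral_afIntegrand_phi_gap (hmono : Monotone (tp N C Δt m)) (hC : 0 < C)
    (hk : k < C) (hτ1 : k * TSC N C Δt ≤ τ) (hτA : τ ≤ k * TSC N C Δt + m * Δt / C)
    (hτB : τ ≤ (k + 1) * TSC N C Δt - m * Δt / C) (c₂ ν : ℝ) {i : ℕ} (hi : i ≤ C - k) :
    IntervalIntegrable (afIntegrand (phi N C Δt c₂ m) (phi N C Δt c₂ m) τ ν) volume
        (tp N C Δt m i + τ) (tp N C Δt m (i + (k + 1))) ∧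
      ∫ t in (tp N C Δt m i + τ)..(tp N C Δt m (i + (k + 1))),
          afIntegrand (phi N C Δt c₂ m) (phi N C Δt c₂ m) τ ν t =
        Complex.exp (2 * Real.pi * Complex.I *
            ((((m : ℝ) / T N Δt) * τ - ctil N C Δt * τ ^ 2 : ℝ) : ℂ)) *
          Complex.exp (-(2 * Real.pi * Complex.I * ((((i : ℝ) / Δt) * τ : ℝ) : ℂ))) *
          Iind (2 * ctil N C Δt * τ - (k : ℝ) / Δt - ν)
            (tp N C Δt m i + τ) (tp N C Δt m (i + (k + 1))) := by
  have hlow := tp_add_le_add hC hk.le hτ1 hτA hτB (i := i) (by omega)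
  have hhigh := tp_add_le_add hC hk.le hτ1 hτA hτB (i := i + 1) (by omega)
  rw [show i + 1 + k = i + (k + 1) by omega] at hhigh
  refine integral_eq_const_mul_Iind_of_eqOn _ (add_le_tp_add hC hk hτ1 hτA hτB hi)
    fun t ht => ?_
  have hgap : ((i + k : ℕ) : ℝ) - i = k := by push_cast; ring
  rw [afIntegrand_phi_of_mem_Ico hmono c₂ (a := i + k) (b := i) (by omega) (by omega)
    ⟨by linarith [ht.1], ht.2⟩ ⟨by linarith [ht.1], by linarith [ht.2]⟩, hgap]

theorem intervalIntegral_afIntegrand_phi_gap_succ (hmono : Monotone (tp N C Δt m))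
    (hC : 0 < C) (hk : k < C) (hτ1 : k * TSC N C Δt ≤ τ)
    (hτA : τ ≤ k * TSC N C Δt + m * Δt / C) (hτB : τ ≤ (k + 1) * TSC N C Δt - m * Δt / C)
    (c₂ ν : ℝ) {i : ℕ} (hi : i < C - k) :
    IntervalIntegrable (afIntegrand (phi N C Δt c₂ m) (phi N C Δt c₂ m) τ ν) volume
        (tp N C Δt m (i + (k + 1))) (tp N C Δt m (i + 1) + τ) ∧
      ∫ t in (tp N C Δt m (i + (k + 1)))..(tp N C Δt m (i + 1) + τ),
          afIntegrand (phi N C Δt c₂ m) (phi N C Δt c₂ m) τ ν t =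
        Complex.exp (2 * Real.pi * Complex.I *
            ((((m : ℝ) / T N Δt) * τ - ctil N C Δt * τ ^ 2 : ℝ) : ℂ)) *
          Complex.exp (-(2 * Real.pi * Complex.I * ((((i : ℝ) / Δt) * τ : ℝ) : ℂ))) *
          Iind (2 * ctil N C Δt * τ - (k : ℝ) / Δt - ν - 1 / Δt)
            (tp N C Δt m (i + (k + 1))) (tp N C Δt m (i + 1) + τ) := by
  have hlow := add_le_tp_add hC hk hτ1 hτA hτB (i := i) (by omega)
  have hhigh := add_le_tp_add hC hk hτ1 hτA hτB (i := i + 1) (by omega)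
  have hle := tp_add_le_add hC hk.le hτ1 hτA hτB (i := i + 1) (by omega)
  rw [show i + 1 + k = i + (k + 1) by omega] at hle
  refine integral_eq_const_mul_Iind_of_eqOn _ hle fun t ht => ?_
  have hgap : 2 * ctil N C Δt * τ - (((i + (k + 1) : ℕ) : ℝ) - i) / Δt - ν =
      2 * ctil N C Δt * τ - (k : ℝ) / Δt - ν - 1 / Δt := by push_cast; ring
  rw [afIntegrand_phi_of_mem_Ico hmono c₂ (a := i + (k + 1)) (b := i) (by omega) (by omega)
    ⟨ht.1.le, by rw [show i + (k + 1) + 1 = i + 1 + (k + 1) by omega]; linarith [ht.2]⟩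
    ⟨by linarith [ht.1], by linarith [ht.2]⟩, hgap]

end Pieces

theorem aaf_closed_form_general
    (N C : ℕ)
    (Δt : ℝ) (hΔt : 0 < Δt) (c₂ : ℝ) (m k : ℕ) (hm : m < N) (hk : k < C) (ν τ : ℝ)
    (hτ1 : (k : ℝ) * TSC N C Δt ≤ τ)
    (hτ2 : τ < (k : ℝ) * TSC N C Δt + min (TSC N C Δt - tp N C Δt m 1) (tp N C Δt m 1)) :
    AF (phi N C Δt c₂ m) (phi N C Δt c₂ m) τ ν =
      Complex.exp (2 * Real.pi * Complex.I *
          ((((m : ℝ) / T N Δt) * τ - ctil N C Δt * τ ^ 2 : ℝ) : ℂ)) *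
        ((∑ i ∈ Finset.range (C - k),
            Complex.exp (-(2 * Real.pi * Complex.I * ((((i : ℝ) / Δt) * τ : ℝ) : ℂ))) *
              (Iind (2 * ctil N C Δt * τ - (k : ℝ) / Δt - ν)
                  (tp N C Δt m i + τ) (tp N C Δt m (i + (k + 1))) +
                Iind (2 * ctil N C Δt * τ - (k : ℝ) / Δt - ν - 1 / Δt)
                  (tp N C Δt m (i + (k + 1))) (tp N C Δt m (i + 1) + τ))) +
          Complex.exp (-(2 * Real.pi * Complex.I *
              (((((C - k : ℕ) : ℝ)) / Δt * τ : ℝ) : ℂ))) *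
            Iind (2 * ctil N C Δt * τ - (k : ℝ) / Δt - ν)
              (tp N C Δt m (C - k) + τ) (T N Δt)) := by
  have hC : 0 < C := Nat.zero_lt_of_lt hk
  obtain ⟨hτA, hτB⟩ := window_bounds hC hτ2.le
  have hmono := tp_mono hC hΔt.le hm.le
  have hgap := fun i (hi : i ≤ C - k) =>
    intervalIntegral_afIntegrand_phi_gap hmono hC hk hτ1 hτA hτB c₂ ν hi
  have hgap_succ := fun i (hi : i < C - k) =>
    intervalIntegral_afIntegrand_phi_gap_succ hmono hC hk hτ1 hτA hτB c₂ ν hi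
  have htail := hgap (C - k) le_rfl
  rw [tp_of_lt (by omega : C < C - k + (k + 1))] at htail
  have hsum := intervalIntegral_eq_sum_interleaved (a := fun i => tp N C Δt m i + τ)
    (fun i hi => (hgap i hi.le).1) (fun i hi => (hgap_succ i hi).1)
  have hhead := IntervalIntegrable.trans_iterate (a := fun i => tp N C Δt m i + τ)
    fun i hi => (hgap i hi.le).1.trans (hgap_succ i hi).1
  simp only [tp_zero, zero_add] at hsum hhead
  rw [AF_eq_intervalIntegral (support_phi_subset c₂ m) (support_phi_subset c₂ m),
    ← intervalIntegral.integral_add_adjacent_intervals hhead htail.1, hsum, htail.2,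
    Finset.sum_congr rfl fun i hi => by
      rw [(hgap i (Finset.mem_range.mp hi).le).2, (hgap_succ i (Finset.mem_range.mp hi)).2],
    mul_add, Finset.mul_sum]
  simp only [mul_add, mul_assoc]

/-- Closed form of the auto-ambiguity function of the `m`-th AFDM chirp subcarrier for `τ`
in the `k`-th subchirp window, with `q̃ = k + 1`, `E = 2·c̃₁·τ − k/Δt − ν` and
`Ẽ = E − 1/Δt`. -/
theorem aaf_closed_form
    (N C : ℕ) (hN : 0 < N) (hNeven : Even N) (hC : 0 < C)
    (Δt : ℝ) (hΔt : 0 < Δt) (c₂ : ℝ) (m k : ℕ) (hm : m < N) (hk : k < C) (ν τ : ℝ)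
    (hτ1 : (k : ℝ) * TSC N C Δt ≤ τ)
    (hτ2 : τ < (k : ℝ) * TSC N C Δt + min (TSC N C Δt - tp N C Δt m 1) (tp N C Δt m 1)) :
    AF (phi N C Δt c₂ m) (phi N C Δt c₂ m) τ ν =
      Complex.exp (2 * Real.pi * Complex.I *
          ((((m : ℝ) / T N Δt) * τ - ctil N C Δt * τ ^ 2 : ℝ) : ℂ)) *
        ((∑ i ∈ Finset.range (C - k),
            Complex.exp (-(2 * Real.pi * Complex.I * ((((i : ℝ) / Δt) * τ : ℝ) : ℂ))) *
              (Iind (2 * ctil N C Δt * τ - (k : ℝ) / Δt - ν)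
                  (tp N C Δt m i + τ) (tp N C Δt m (i + (k + 1))) +
                Iind (2 * ctil N C Δt * τ - (k : ℝ) / Δt - ν - 1 / Δt)
                  (tp N C Δt m (i + (k + 1))) (tp N C Δt m (i + 1) + τ))) +
          Complex.exp (-(2 * Real.pi * Complex.I *
              (((((C - k : ℕ) : ℝ)) / Δt * τ : ℝ) : ℂ))) *
            Iind (2 * ctil N C Δt * τ - (k : ℝ) / Δt - ν)
              (tp N C Δt m (C - k) + τ) (T N Δt)) :=
  aaf_closed_form_general N C Δt hΔt c₂ m k hm hk ν τ hτ1 hτ2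

end AFDM
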